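/- arXiv:1707.00891 — 3 statements merged into one kernel-verified Lean document; each statement's English description precedes it below -/
import Mathlib

section
/- With β = 2(n−2) + 2nX − n²X² ∈ ℂ[X], one has the congruences n(n−2)·X^{n−1} − β·w' ≡ 2(n−1)(n−2)·X^{n−2} (mod Xⁿ − X^{n−1}) and −β·w'' ≡ 2(n−1)(n−2)²·X^{n−3} (mod Xⁿ − X^{n−1}). Consequently, in R ⊕ R the element (X^{n−1}, 0) differs from (2(n−1)/n · X^{n−2}, 2(n−1)(n−2)/n · X^{n−3}) by an element of the form (p·w', p·w'') with p ∈ R. -/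
open Polynomial

private lemma beta_aux1 (a : ℂ) (m : ℕ) :
    C (a * (a - 2)) * (X : Polynomial ℂ) ^ (m + 2) -
        (C (2 * (a - 2)) + C (2 * a) * X - C (a ^ 2) * X ^ 2) *
          (C a * X ^ (m + 2) - C (a - 1) * X ^ (m + 1)) -
      C (2 * (a - 1) * (a - 2)) * X ^ (m + 1) =
    ((X : Polynomial ℂ) ^ (m + 3) - X ^ (m + 2)) * (C (a ^ 3) * X - C (a ^ 2)) := by
  simp only [pow_add, C_mul, C_add, C_sub, C_pow, map_ofNat, C_1]
  ring

private lemma beta_aux2 (a : ℂ) (m : ℕ) :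
    -((C (2 * (a - 2)) + C (2 * a) * X - C (a ^ 2) * X ^ 2) *
          (C (a * (a - 1)) * (X : Polynomial ℂ) ^ (m + 1) - C ((a - 1) * (a - 2)) * X ^ m)) -
      C (2 * (a - 1) * (a - 2) ^ 2) * X ^ m =
    ((X : Polynomial ℂ) ^ (m + 3) - X ^ (m + 2)) * C (a ^ 4 - a ^ 3) := by
  simp only [pow_add, C_mul, C_add, C_sub, C_pow, map_ofNat, C_1]
  ring

/-- Let `n ≥ 3`, `w' = nX^{n-1} - (n-1)X^{n-2}`, `w'' = n(n-1)X^{n-2} - (n-1)(n-2)X^{n-3}`,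
and `β = 2(n-2) + 2nX - n²X²`.  Then `n(n-2)·X^{n-1} - β·w' ≡ 2(n-1)(n-2)·X^{n-2}` and
`-β·w'' ≡ 2(n-1)(n-2)²·X^{n-3}` modulo `Xⁿ - X^{n-1}`.  Consequently, in `R ⊕ R` with
`R = ℂ[X]/(Xⁿ - X^{n-1})`, the element `(X^{n-1}, 0)` differs from
`(2(n-1)/n·X^{n-2}, 2(n-1)(n-2)/n·X^{n-3})` by an element of the form `(p·w', p·w'')`. -/
theorem beta_correction (n : ℕ) (hn : 3 ≤ n) :
    ((X : Polynomial ℂ) ^ n - X ^ (n - 1)) ∣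
        (C ((n : ℂ) * ((n : ℂ) - 2)) * X ^ (n - 1) -
            (C (2 * ((n : ℂ) - 2)) + C (2 * (n : ℂ)) * X - C ((n : ℂ) ^ 2) * X ^ 2) *
              (C (n : ℂ) * X ^ (n - 1) - C ((n : ℂ) - 1) * X ^ (n - 2)) -
          C (2 * ((n : ℂ) - 1) * ((n : ℂ) - 2)) * X ^ (n - 2)) ∧
    ((X : Polynomial ℂ) ^ n - X ^ (n - 1)) ∣
        (-((C (2 * ((n : ℂ) - 2)) + C (2 * (n : ℂ)) * X - C ((n : ℂ) ^ 2) * X ^ 2) *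
              (C ((n : ℂ) * ((n : ℂ) - 1)) * X ^ (n - 2) -
                C (((n : ℂ) - 1) * ((n : ℂ) - 2)) * X ^ (n - 3))) -
          C (2 * ((n : ℂ) - 1) * ((n : ℂ) - 2) ^ 2) * X ^ (n - 3)) ∧
    ∃ p : Polynomial ℂ ⧸ Ideal.span {(X : Polynomial ℂ) ^ n - X ^ (n - 1)},
      Ideal.Quotient.mk (Ideal.span {(X : Polynomial ℂ) ^ n - X ^ (n - 1)}) (X ^ (n - 1)) -
          Ideal.Quotient.mk (Ideal.span {(X : Polynomial ℂ) ^ n - X ^ (n - 1)})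
            (C (2 * ((n : ℂ) - 1) / (n : ℂ)) * X ^ (n - 2)) =
        p * Ideal.Quotient.mk (Ideal.span {(X : Polynomial ℂ) ^ n - X ^ (n - 1)})
            (C (n : ℂ) * X ^ (n - 1) - C ((n : ℂ) - 1) * X ^ (n - 2)) ∧
      (0 : Polynomial ℂ ⧸ Ideal.span {(X : Polynomial ℂ) ^ n - X ^ (n - 1)}) -
          Ideal.Quotient.mk (Ideal.span {(X : Polynomial ℂ) ^ n - X ^ (n - 1)})
            (C (2 * ((n : ℂ) - 1) * ((n : ℂ) - 2) / (n : ℂ)) * X ^ (n - 3)) =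
        p * Ideal.Quotient.mk (Ideal.span {(X : Polynomial ℂ) ^ n - X ^ (n - 1)})
            (C ((n : ℂ) * ((n : ℂ) - 1)) * X ^ (n - 2) -
              C (((n : ℂ) - 1) * ((n : ℂ) - 2)) * X ^ (n - 3)) := by
  obtain ⟨m, rfl⟩ : ∃ m, n = m + 3 := ⟨n - 3, by omega⟩
  set a : ℂ := ((m + 3 : ℕ) : ℂ) with ha_def
  have hd1 := beta_aux1 a m
  have hd2 := beta_aux2 a m
  have ha : a ≠ 0 := Nat.cast_ne_zero.2 (by omega)
  have ha2 : a - 2 ≠ 0 := sub_ne_zero.2 (by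
    rw [ha_def]; exact_mod_cast (by omega : m + 3 ≠ 2))
  set β : Polynomial ℂ := C (2 * (a - 2)) + C (2 * a) * X - C (a ^ 2) * X ^ 2 with hβ
  set c : ℂ := (a * (a - 2))⁻¹ with hc
  have e1 : C c * C (a * (a - 2)) = (1 : Polynomial ℂ) := by
    rw [← C_mul, hc, inv_mul_cancel₀ (mul_ne_zero ha ha2), C_1]
  have e2 : C c * C (2 * (a - 1) * (a - 2)) = C (2 * (a - 1) / a) := by
    rw [← C_mul]; congr 1; rw [hc]; field_simp
  have e3 : C c * C (2 * (a - 1) * (a - 2) ^ 2) = C (2 * (a - 1) * (a - 2) / a) := by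
    rw [← C_mul]; congr 1; rw [hc]; field_simp
  have key1 : ((X : Polynomial ℂ) ^ (m + 3) - X ^ (m + 2)) ∣
      ((X : Polynomial ℂ) ^ (m + 2) - C (2 * (a - 1) / a) * X ^ (m + 1) -
        C c * β * (C a * X ^ (m + 2) - C (a - 1) * X ^ (m + 1))) := by
    have key : (X : Polynomial ℂ) ^ (m + 2) - C (2 * (a - 1) / a) * X ^ (m + 1) -
        C c * β * (C a * X ^ (m + 2) - C (a - 1) * X ^ (m + 1)) =
        C c * (C (a * (a - 2)) * X ^ (m + 2) -
          β * (C a * X ^ (m + 2) - C (a - 1) * X ^ (m + 1)) -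
          C (2 * (a - 1) * (a - 2)) * X ^ (m + 1)) := by
      linear_combination (-(X ^ (m + 2)) : Polynomial ℂ) * e1 + (X ^ (m + 1) : Polynomial ℂ) * e2
    rw [key, hd1]
    exact ⟨C c * (C (a ^ 3) * X - C (a ^ 2)), by ring⟩
  have key2 : ((X : Polynomial ℂ) ^ (m + 3) - X ^ (m + 2)) ∣
      ((0 : Polynomial ℂ) - C (2 * (a - 1) * (a - 2) / a) * X ^ m -
        C c * β * (C (a * (a - 1)) * X ^ (m + 1) - C ((a - 1) * (a - 2)) * X ^ m)) := by
    have key : (0 : Polynomial ℂ) - C (2 * (a - 1) * (a - 2) / a) * X ^ m -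
        C c * β * (C (a * (a - 1)) * X ^ (m + 1) - C ((a - 1) * (a - 2)) * X ^ m) =
        C c * (-(β * (C (a * (a - 1)) * X ^ (m + 1) - C ((a - 1) * (a - 2)) * X ^ m)) -
          C (2 * (a - 1) * (a - 2) ^ 2) * X ^ m) := by
      linear_combination ((X ^ m : Polynomial ℂ)) * e3
    rw [key, hd2]
    exact ⟨C c * C (a ^ 4 - a ^ 3), by ring⟩
  refine ⟨⟨_, hd1⟩, ⟨_, hd2⟩, ?_⟩
  set I : Ideal (Polynomial ℂ) :=
    Ideal.span {(X : Polynomial ℂ) ^ (m + 3) - X ^ (m + 3 - 1)} with hI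
  refine ⟨Ideal.Quotient.mk I (C c * β), ?_, ?_⟩
  · show Ideal.Quotient.mk I (X ^ (m + 2)) -
        Ideal.Quotient.mk I (C (2 * (a - 1) / a) * X ^ (m + 1)) =
      Ideal.Quotient.mk I (C c * β) *
        Ideal.Quotient.mk I (C a * X ^ (m + 2) - C (a - 1) * X ^ (m + 1))
    rw [← map_mul, ← map_sub, Ideal.Quotient.eq, hI,
      show m + 3 - 1 = m + 2 from rfl, Ideal.mem_span_singleton]
    exact key1
  · show Ideal.Quotient.mk I 0 -
        Ideal.Quotient.mk I (C (2 * (a - 1) * (a - 2) / a) * X ^ m) =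
      Ideal.Quotient.mk I (C c * β) *
        Ideal.Quotient.mk I (C (a * (a - 1)) * X ^ (m + 1) - C ((a - 1) * (a - 2)) * X ^ m)
    rw [← map_mul, ← map_sub, Ideal.Quotient.eq, hI,
      show m + 3 - 1 = m + 2 from rfl, Ideal.mem_span_singleton]
    exact key2
end

section
/- There do not exist polynomials p, q, r ∈ ℂ[X], with q lying in the ℂ-linear span of 1, X, …, X^{n−2} and r lying in the ℂ-linear span of 1, X, …, X^{n−4} (so r = 0 when n = 3), such that both X^{n−1} ≡ p·w' + q (mod Xⁿ − X^{n−1}) and 0 ≡ p·w'' + r (mod Xⁿ − X^{n−1}). -/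
open Polynomial

private lemma coeff_zero_of_xpow_dvd {s : Polynomial ℂ} {N k : ℕ}
    (h : (X : Polynomial ℂ) ^ N ∣ s) (hk : k < N) : s.coeff k = 0 := by
  obtain ⟨c, rfl⟩ := h
  rw [mul_comm, coeff_mul_X_pow']
  simp [Nat.not_le.mpr hk]

/-- Let `n ≥ 3`, `w' = nX^{n-1} - (n-1)X^{n-2}` and `w'' = n(n-1)X^{n-2} - (n-1)(n-2)X^{n-3}`.
There are no `p, q, r ∈ ℂ[X]` with `q ∈ span{1, …, X^{n-2}}` (i.e. `deg q < n-1`) and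
`r ∈ span{1, …, X^{n-4}}` (i.e. `deg r < n-3`; so `r = 0` when `n = 3`) such that
`X^{n-1} ≡ p·w' + q` and `0 ≡ p·w'' + r` modulo `Xⁿ - X^{n-1}`. -/
theorem no_lower_representative (n : ℕ) (hn : 3 ≤ n) :
    ¬ ∃ p q r : Polynomial ℂ,
        q.degree < ((n - 1 : ℕ) : WithBot ℕ) ∧
        r.degree < ((n - 3 : ℕ) : WithBot ℕ) ∧
        ((X : Polynomial ℂ) ^ n - X ^ (n - 1)) ∣
          (X ^ (n - 1) -
            (p * (C (n : ℂ) * X ^ (n - 1) - C ((n : ℂ) - 1) * X ^ (n - 2)) + q)) ∧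
        ((X : Polynomial ℂ) ^ n - X ^ (n - 1)) ∣
          (0 -
            (p * (C ((n : ℂ) * ((n : ℂ) - 1)) * X ^ (n - 2) -
                C (((n : ℂ) - 1) * ((n : ℂ) - 2)) * X ^ (n - 3)) + r)) := by
  rintro ⟨p, q, r, hq, hr, h1, h2⟩
  obtain ⟨m, rfl⟩ : ∃ m, n = m + 3 := ⟨n - 3, by omega⟩
  simp only [show m + 3 - 1 = m + 2 by omega, show m + 3 - 2 = m + 1 by omega,
    show m + 3 - 3 = m by omega] at hq hr h1 h2
  set a : ℂ := ((m + 3 : ℕ) : ℂ) * (((m + 3 : ℕ) : ℂ) - 1) with ha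
  set b : ℂ := (((m + 3 : ℕ) : ℂ) - 1) * (((m + 3 : ℕ) : ℂ) - 2) with hb
  -- X^(m+2) divides X^(m+3) - X^(m+2)
  have hX : (X : Polynomial ℂ) ^ (m + 2) ∣ (X ^ (m + 3) - X ^ (m + 2)) := by
    have : (X : Polynomial ℂ) ^ (m + 3) - X ^ (m + 2) = X ^ (m + 2) * (X - 1) := by ring
    rw [this]; exact dvd_mul_right _ _
  have h2' : (X : Polynomial ℂ) ^ (m + 2) ∣
      (p * (C a * X ^ (m + 1) - C b * X ^ m) + r) := by
    have := hX.trans h2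
    rw [zero_sub, dvd_neg] at this
    exact this
  have h1' : (X : Polynomial ℂ) ^ (m + 2) ∣
      (p * (C ((m + 3 : ℕ) : ℂ) * X ^ (m + 2) - C (((m + 3 : ℕ) : ℂ) - 1) * X ^ (m + 1)) + q) := by
    have h := dvd_sub (dvd_refl ((X : Polynomial ℂ) ^ (m + 2))) (hX.trans h1)
    simpa using h
  -- rewrite the products to extract coefficients
  have hcoeff2 : ∀ k, k < m + 2 →
      (if m + 1 ≤ k then a * p.coeff (k - (m + 1)) else 0)
        - (if m ≤ k then b * p.coeff (k - m) else 0) + r.coeff k = 0 := by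
    intro k hk
    have := coeff_zero_of_xpow_dvd h2' hk
    rw [show p * (C a * X ^ (m + 1) - C b * X ^ m)
        = (C a * p) * X ^ (m + 1) - (C b * p) * X ^ m by ring] at this
    rw [coeff_add, coeff_sub, coeff_mul_X_pow', coeff_mul_X_pow'] at this
    simpa only [coeff_C_mul] using this
  have hcoeff1 : ∀ k, k < m + 2 →
      (if m + 2 ≤ k then ((m + 3 : ℕ) : ℂ) * p.coeff (k - (m + 2)) else 0)
        - (if m + 1 ≤ k then (((m + 3 : ℕ) : ℂ) - 1) * p.coeff (k - (m + 1)) else 0)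
        + q.coeff k = 0 := by
    intro k hk
    have := coeff_zero_of_xpow_dvd h1' hk
    rw [show p * (C ((m + 3 : ℕ) : ℂ) * X ^ (m + 2) - C (((m + 3 : ℕ) : ℂ) - 1) * X ^ (m + 1))
        = (C ((m + 3 : ℕ) : ℂ) * p) * X ^ (m + 2)
          - (C (((m + 3 : ℕ) : ℂ) - 1) * p) * X ^ (m + 1) by ring] at this
    rw [coeff_add, coeff_sub, coeff_mul_X_pow', coeff_mul_X_pow'] at this
    simpa only [coeff_C_mul] using this
  -- r = 0
  have hr0 : r = 0 := by
    ext k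
    rcases lt_or_ge k m with hkm | hkm
    · have := hcoeff2 k (by omega)
      rw [if_neg (by omega), if_neg (by omega)] at this
      simpa using this
    · exact coeff_eq_zero_of_degree_lt (lt_of_lt_of_le hr (by exact_mod_cast Nat.cast_le.mpr hkm))
  -- p.coeff 0 = 0
  have hb0 : b ≠ 0 := by
    have h1 : ((m + 3 : ℕ) : ℂ) - 1 = ((m + 2 : ℕ) : ℂ) := by push_cast; ring
    have h2 : ((m + 3 : ℕ) : ℂ) - 2 = ((m + 1 : ℕ) : ℂ) := by push_cast; ring
    rw [hb, h1, h2]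
    exact mul_ne_zero (Nat.cast_ne_zero.mpr (by omega)) (Nat.cast_ne_zero.mpr (by omega))
  have hp0 : p.coeff 0 = 0 := by
    have := hcoeff2 m (by omega)
    rw [if_neg (by omega), if_pos (le_refl m), Nat.sub_self, hr0] at this
    simp only [coeff_zero, add_zero, zero_sub] at this
    have hb' : b * p.coeff 0 = 0 := by linear_combination -this
    rcases mul_eq_zero.mp hb' with h | h
    · exact absurd h hb0
    · exact h
  -- q = 0
  have hq0 : q = 0 := by
    ext k
    rcases lt_or_ge k (m + 2) with hkm | hkm
    · have := hcoeff1 k hkm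
      rw [if_neg (by omega)] at this
      rcases lt_or_ge k (m + 1) with hk1 | hk1
      · rw [if_neg (by omega)] at this
        simpa using this
      · have hk : k = m + 1 := by omega
        subst hk
        rw [if_pos (le_refl _), Nat.sub_self, hp0] at this
        simpa using this
    · exact coeff_eq_zero_of_degree_lt (lt_of_lt_of_le hq (by exact_mod_cast Nat.cast_le.mpr hkm))
  -- evaluate at 1
  subst hr0 hq0
  obtain ⟨c1, hc1⟩ := h1
  obtain ⟨c2, hc2⟩ := h2
  have e1 := congrArg (eval 1) hc1
  have e2 := congrArg (eval 1) hc2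
  simp only [eval_sub, eval_add, eval_mul, eval_pow, eval_X, eval_C, one_pow, eval_zero,
    eval_one, coeff_zero] at e1 e2
  have hp1 : p.eval 1 = 1 := by linear_combination -e1
  have : a = b := by
    rw [hp1] at e2
    linear_combination -e2
  rw [ha, hb] at this
  have hcast : ((m + 3 : ℕ) : ℂ) = (m : ℂ) + 3 := by push_cast; ring
  rw [hcast] at this
  have : (2 : ℂ) * ((m : ℂ) + 2) = 0 := by linear_combination this
  have hm2 : ((m : ℂ) + 2) ≠ 0 := by
    have : ((m + 2 : ℕ) : ℂ) ≠ 0 := Nat.cast_ne_zero.mpr (by omega)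
    push_cast at this
    exact this
  have := mul_eq_zero.mp this
  rcases this with h | h
  · norm_num at h
  · exact hm2 h
end

section
/- One has ψ + A(x − x², 0) = (x, 0, x² − x, −8x², 0) in R⁵; that is, the cocycle ψ = (x², 0, 0, −8x², 0) is cohomologous to ψ' = (x, 0, x² − x, −8x², 0), whose first two coordinates lie in the ℂ-linear span of 1 and x. -/
open Polynomial

/-- The ring `R = ℂ[X]/(X³ - X²)`. -/
noncomputable abbrev R3 : Type :=
  Polynomial ℂ ⧸ Ideal.span {(X : Polynomial ℂ) ^ 3 - X ^ 2}

/-- The class `x` of `X` in `R = ℂ[X]/(X³ - X²)`. -/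
noncomputable def xR : R3 :=
  Ideal.Quotient.mk (Ideal.span {(X : Polynomial ℂ) ^ 3 - X ^ 2}) X

/-- The differential `∂⁻¹ : R² → R⁵`. -/
noncomputable def Amap (p : R3 × R3) : Fin 5 → R3 :=
  ![p.1,
    (3 * xR ^ 2 - 2 * xR) * p.1,
    (9 * xR - 1) * p.1 + (3 * xR ^ 2 - 2 * xR) * p.2,
    p.2,
    (3 * xR ^ 2 - 2 * xR) * p.2]

/-- The differential `∂⁰ : R⁵ → R²`. -/
noncomputable def Bmap (v : Fin 5 → R3) : R3 × R3 :=
  ((9 * xR - 1) * v 0 - v 2 + (3 * xR ^ 2 - 2 * xR) * v 3,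
   (9 * xR - 1) * v 1 - (3 * xR ^ 2 - 2 * xR) * v 2 + (3 * xR ^ 2 - 2 * xR) * v 4)

/-- The Gornik cocycle `ψ = (x², 0, 0, -8x², 0) ∈ R⁵`. -/
noncomputable def psi : Fin 5 → R3 :=
  ![xR ^ 2, 0, 0, -8 * xR ^ 2, 0]

lemma hx3 : xR ^ 3 = xR ^ 2 := by
  unfold xR
  rw [← map_pow, ← map_pow, Ideal.Quotient.eq]
  exact Ideal.subset_span rfl

/-- `ψ + A(x - x², 0) = (x, 0, x² - x, -8x², 0)`: the cocycle `ψ` is cohomologous to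
`ψ'`, whose first two coordinates lie in the `ℂ`-linear span of `1` and `x`. -/
theorem psi_cohomologous_representative :
    psi + Amap (xR - xR ^ 2, 0) = ![xR, 0, xR ^ 2 - xR, -8 * xR ^ 2, 0] := by
  funext i
  fin_cases i
  · show xR ^ 2 + (xR - xR ^ 2) = xR
    ring
  · show 0 + (3 * xR ^ 2 - 2 * xR) * (xR - xR ^ 2) = 0
    linear_combination (2 - 3 * xR) * hx3
  · show 0 + ((9 * xR - 1) * (xR - xR ^ 2) + (3 * xR ^ 2 - 2 * xR) * 0) = xR ^ 2 - xR
    linear_combination (-9 : R3) * hx3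
  · show -8 * xR ^ 2 + 0 = -8 * xR ^ 2
    ring
  · show 0 + (3 * xR ^ 2 - 2 * xR) * 0 = 0
    ring
end
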